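/- Let c be a Lipschitz closed immersed planar curve and suppose there exist θ₁ < θ₂ with c(θ₁) = c(θ₂). Then there exist θ, θ̃ ∈ [θ₁, θ₂] at which c is differentiable with |angle(c'(θ)) − angle(c'(θ̃))| ≥ π. -/

import Mathlib

open MeasureTheory Real

/-- The angle of a nonzero complex number, taken in `[0, 2π)`. -/
noncomputable def angle2pi (z : ℂ) : ℝ :=
  if 0 ≤ Complex.arg z then Complex.arg z else Complex.arg z + 2 * π

lemma angle2pi_mem (z : ℂ) : angle2pi z ∈ Set.Ico 0 (2 * π) := by
  have h1 := Complex.neg_pi_lt_arg z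
  have h2 := Complex.arg_le_pi z
  have hπ := pi_pos
  unfold angle2pi
  split_ifs with h
  · exact ⟨h, by linarith⟩
  · push_neg at h
    exact ⟨by linarith, by linarith⟩

lemma rot_re (z : ℂ) (μ : ℝ) :
    (z * Complex.exp (-(μ : ℂ) * Complex.I)).re
      = ‖z‖ * Real.cos (angle2pi z - μ) := by
  conv_lhs => rw [← Complex.norm_mul_exp_arg_mul_I z]
  rw [mul_assoc, ← Complex.exp_add,
    show (↑z.arg * Complex.I + -(↑μ : ℂ) * Complex.I) = ((z.arg - μ : ℝ) : ℂ) * Complex.I by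
      push_cast; ring]
  simp only [Complex.mul_re, Complex.ofReal_re, Complex.ofReal_im,
    Complex.exp_ofReal_mul_I_re, Complex.exp_ofReal_mul_I_im, zero_mul, sub_zero]
  unfold angle2pi
  split_ifs with h
  · rfl
  · rw [show Complex.arg z + 2 * π - μ = (Complex.arg z - μ) + 2 * π by ring,
      Real.cos_add_two_pi]

lemma rot_im (z : ℂ) (μ : ℝ) :
    (z * Complex.exp (-(μ : ℂ) * Complex.I)).im
      = ‖z‖ * Real.sin (angle2pi z - μ) := by
  conv_lhs => rw [← Complex.norm_mul_exp_arg_mul_I z]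
  rw [mul_assoc, ← Complex.exp_add,
    show (↑z.arg * Complex.I + -(↑μ : ℂ) * Complex.I) = ((z.arg - μ : ℝ) : ℂ) * Complex.I by
      push_cast; ring]
  simp only [Complex.mul_im, Complex.ofReal_re, Complex.ofReal_im,
    Complex.exp_ofReal_mul_I_re, Complex.exp_ofReal_mul_I_im, zero_mul, add_zero]
  unfold angle2pi
  split_ifs with h
  · rfl
  · rw [show Complex.arg z + 2 * π - μ = (Complex.arg z - μ) + 2 * π by ring,
      Real.sin_add_two_pi]

lemma norm_deriv_le_of_lip {f : ℝ → ℂ} {K : NNReal} (hf : LipschitzWith K f) (x : ℝ) :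
    ‖deriv f x‖ ≤ K := by
  by_cases hd : DifferentiableAt ℝ f x
  · have h1 : deriv f x = fderiv ℝ f x 1 := by rw [fderiv_apply_one_eq_deriv]
    calc ‖deriv f x‖ = ‖fderiv ℝ f x 1‖ := by rw [h1]
      _ ≤ ‖fderiv ℝ f x‖ * ‖(1 : ℝ)‖ := (fderiv ℝ f x).le_opNorm 1
      _ ≤ K * 1 := by
          rw [norm_one]
          exact mul_le_mul_of_nonneg_right (norm_fderiv_le_of_lipschitz ℝ hf) zero_le_one
      _ = K := mul_one _
  · rw [deriv_zero_of_not_differentiableAt hd, norm_zero]; exact K.coe_nonneg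

lemma pm_half_pi {x : ℝ} (hx : x ∈ Set.Icc (-(π/2)) (π/2)) (hcos : Real.cos x = 0) :
    x = π/2 ∨ x = -(π/2) := by
  obtain ⟨k, hk⟩ := Real.cos_eq_zero_iff.1 hcos
  have hπ := pi_pos
  have hk1 : (k : ℝ) ≤ 0 := by nlinarith [hx.2, hk]
  have hk2 : (-1 : ℝ) ≤ (k : ℝ) := by nlinarith [hx.1, hk]
  have : k = 0 ∨ k = -1 := by
    have h1 : k ≤ 0 := by exact_mod_cast hk1
    have h2 : (-1 : ℤ) ≤ k := by exact_mod_cast hk2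
    omega
  rcases this with h | h <;> subst h
  · left; rw [hk]; push_cast; ring
  · right; rw [hk]; push_cast; ring


lemma lipschitz_integral_deriv {f : ℝ → ℂ} {K : NNReal} (hf : LipschitzWith K f)
    {a b : ℝ} (hab : a ≤ b) :
    ∫ x in Set.Ioc a b, deriv f x = f b - f a := by
  have hcont : Continuous f := hf.continuous
  have hii : ∀ u v : ℝ, IntervalIntegrable f volume u v := fun u v =>
    hcont.intervalIntegrable u v
  set h : ℕ → ℝ := fun n => ((n : ℝ) + 1)⁻¹ with hh
  have hpos : ∀ n, 0 < h n := fun n => by positivity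
  have hlim : Filter.Tendsto h Filter.atTop (nhds 0) := by
    simpa [hh, one_div] using tendsto_one_div_add_atTop_nhds_zero_nat (𝕜 := ℝ)
  set F : ℕ → ℝ → ℂ := fun n x => (h n)⁻¹ • (f (x + h n) - f x) with hF
  -- a.e. convergence
  have hae : ∀ᵐ x ∂(volume.restrict (Set.Ioc a b)),
      Filter.Tendsto (fun n => F n x) Filter.atTop (nhds (deriv f x)) := by
    have hd : ∀ᵐ x ∂(volume : Measure ℝ), DifferentiableAt ℝ f x := hf.ae_differentiableAt
    filter_upwards [ae_restrict_of_ae hd] with x hx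
    have hslope : Filter.Tendsto (slope f x) (nhdsWithin x {x}ᶜ) (nhds (deriv f x)) :=
      hasDerivAt_iff_tendsto_slope.1 hx.hasDerivAt
    have hseq : Filter.Tendsto (fun n => x + h n) Filter.atTop (nhdsWithin x {x}ᶜ) := by
      apply tendsto_nhdsWithin_of_tendsto_nhds_of_eventually_within
      · simpa using (tendsto_const_nhds.add hlim)
      · exact Filter.Eventually.of_forall fun n => by
          simp only [Set.mem_compl_iff, Set.mem_singleton_iff]
          intro hcontra
          have := (hpos n).ne'
          nlinarith [hpos n, add_eq_left.mp hcontra]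
    have := hslope.comp hseq
    convert this using 2 with n
    simp [slope, hF, vsub_eq_sub]
  -- bound
  have hbound : ∀ n, ∀ᵐ x ∂(volume.restrict (Set.Ioc a b)), ‖F n x‖ ≤ (K : ℝ) := by
    intro n
    refine Filter.Eventually.of_forall fun x => ?_
    have h1 : ‖f (x + h n) - f x‖ ≤ K * h n := by
      have := hf.dist_le_mul (x + h n) x
      simpa [dist_eq_norm, abs_of_pos (hpos n)] using this
    rw [hF]
    simp only [norm_smul, norm_inv, Real.norm_eq_abs, abs_of_pos (hpos n)]
    rw [inv_mul_le_iff₀ (hpos n)]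
    linarith [h1]
  have hFmeas : ∀ n, AEStronglyMeasurable (F n) (volume.restrict (Set.Ioc a b)) := by
    intro n
    have hFc : Continuous (F n) := by
      show Continuous (fun x => (h n)⁻¹ • (f (x + h n) - f x))
      fun_prop
    exact hFc.aestronglyMeasurable.restrict
  have hderivmeas : AEStronglyMeasurable (deriv f) (volume.restrict (Set.Ioc a b)) :=
    (measurable_deriv f).aestronglyMeasurable.restrict
  have hKint : Integrable (fun _ : ℝ => (K : ℝ)) (volume.restrict (Set.Ioc a b)) :=
    integrable_const _
  have hmain := MeasureTheory.tendsto_integral_of_dominated_convergence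
    (fun _ => (K : ℝ)) hFmeas hKint hbound hae
  -- compute ∫ F n
  have hcomp : ∀ n, ∫ x in Set.Ioc a b, F n x =
      (h n)⁻¹ • ((∫ x in b..(b + h n), f x) - ∫ x in a..(a + h n), f x) := by
    intro n
    rw [← intervalIntegral.integral_of_le hab]
    rw [intervalIntegral.integral_smul]
    congr 1
    have h2 : ∫ x in a..b, (f (x + h n) - f x) =
        (∫ x in a..b, f (x + h n)) - ∫ x in a..b, f x := by
      apply intervalIntegral.integral_sub
      · exact (hcont.comp (continuous_id.add continuous_const)).intervalIntegrable a b
      · exact hii a b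
    rw [h2, intervalIntegral.integral_comp_add_right]
    have e1 : ∫ x in (a + h n)..(b + h n), f x =
        (∫ x in (a + h n)..b, f x) + ∫ x in b..(b + h n), f x :=
      (intervalIntegral.integral_add_adjacent_intervals (hii _ _) (hii _ _)).symm
    have e2 : ∫ x in a..b, f x =
        (∫ x in a..(a + h n), f x) + ∫ x in (a + h n)..b, f x :=
      (intervalIntegral.integral_add_adjacent_intervals (hii _ _) (hii _ _)).symm
    rw [e1, e2]; ring
  -- limit of RHS
  have hlim2 : Filter.Tendsto (fun n => ∫ x in Set.Ioc a b, F n x) Filter.atTop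
      (nhds (f b - f a)) := by
    have key : ∀ (s : ℝ) n, ‖(h n)⁻¹ • (∫ x in s..(s + h n), f x) - f s‖ ≤ K * h n := by
      intro s n
      have hqe : (h n)⁻¹ • (∫ x in s..(s + h n), f x) - f s
          = (h n)⁻¹ • (∫ x in s..(s + h n), (f x - f s)) := by
        rw [intervalIntegral.integral_sub (hii _ _) (intervalIntegrable_const)]
        rw [smul_sub, intervalIntegral.integral_const]
        rw [show s + h n - s = h n by ring, smul_smul, inv_mul_cancel₀ (hpos n).ne', one_smul]
      rw [hqe]
      have hb2 : ‖∫ x in s..(s + h n), (f x - f s)‖ ≤ (K * h n) * |s + h n - s| := by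
        apply intervalIntegral.norm_integral_le_of_norm_le_const
        intro x hx
        rw [Set.uIoc_of_le (by linarith [hpos n])] at hx
        have hd : ‖f x - f s‖ ≤ (K : ℝ) * dist x s := by
          simpa [dist_eq_norm] using hf.dist_le_mul x s
        have hds : dist x s ≤ h n := by
          rw [Real.dist_eq, abs_of_pos (by linarith [hx.1])]
          linarith [hx.2]
        have habs : |s + h n - s| = h n := by
          rw [show s + h n - s = h n by ring, abs_of_pos (hpos n)]
        nlinarith [K.coe_nonneg, dist_nonneg (x := x) (y := s)]
      rw [norm_smul, norm_inv, Real.norm_eq_abs, abs_of_pos (hpos n)]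
      rw [inv_mul_le_iff₀ (hpos n)]
      calc ‖∫ x in s..(s + h n), (f x - f s)‖ ≤ (K * h n) * |s + h n - s| := hb2
        _ = K * h n * h n := by rw [show s + h n - s = h n by ring, abs_of_pos (hpos n)]
        _ = h n * (K * h n) := by ring
    have hsq : Filter.Tendsto
        (fun n => (h n)⁻¹ • ((∫ x in b..(b + h n), f x) - ∫ x in a..(a + h n), f x))
        Filter.atTop (nhds (f b - f a)) := by
      rw [show f b - f a = f b - f a from rfl]
      have : ∀ n, (h n)⁻¹ • ((∫ x in b..(b + h n), f x) - ∫ x in a..(a + h n), f x)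
          = ((h n)⁻¹ • (∫ x in b..(b + h n), f x) - f b)
            - ((h n)⁻¹ • (∫ x in a..(a + h n), f x) - f a) + (f b - f a) := by
        intro n; rw [smul_sub]; ring
      simp only [this]
      have t1 : Filter.Tendsto (fun n => (h n)⁻¹ • (∫ x in b..(b + h n), f x) - f b)
          Filter.atTop (nhds 0) := by
        apply squeeze_zero_norm (fun n => key b n)
        simpa using Filter.Tendsto.const_mul (K : ℝ) hlim
      have t2 : Filter.Tendsto (fun n => (h n)⁻¹ • (∫ x in a..(a + h n), f x) - f a)
          Filter.atTop (nhds 0) := by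
        apply squeeze_zero_norm (fun n => key a n)
        simpa using Filter.Tendsto.const_mul (K : ℝ) hlim
      have := (t1.sub t2).add (tendsto_const_nhds (x := f b - f a))
      simpa using this
    simpa only [← hcomp] using hsq
  exact tendsto_nhds_unique hmain hlim2

/-- If a Lipschitz immersed closed curve has a self-intersection `c(θ₁) = c(θ₂)`, then on
`[θ₁, θ₂]` there are two tangent directions whose angles differ by at least π. -/
theorem stmt12 (c : ℝ → ℂ) (K : NNReal) (hc : LipschitzWith K c)
    (hclosed : c 0 = c (2 * π))
    (himm : ∀ᵐ θ ∂(volume.restrict (Set.Icc 0 (2 * π))), deriv c θ ≠ 0)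
    (θ₁ θ₂ : ℝ) (h0 : 0 ≤ θ₁) (h12 : θ₁ < θ₂) (h2 : θ₂ < 2 * π)
    (heq : c θ₁ = c θ₂) :
    ∃ θ ∈ Set.Icc θ₁ θ₂, ∃ θ' ∈ Set.Icc θ₁ θ₂,
      DifferentiableAt ℝ c θ ∧ DifferentiableAt ℝ c θ' ∧
      deriv c θ ≠ 0 ∧ deriv c θ' ≠ 0 ∧
      π ≤ |angle2pi (deriv c θ) - angle2pi (deriv c θ')| := by
  by_contra hcon
  push_neg at hcon
  set ν := volume.restrict (Set.Ioc θ₁ θ₂) with hν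
  have hsub : Set.Ioc θ₁ θ₂ ⊆ Set.Icc 0 (2*π) := fun x hx =>
    ⟨le_trans h0 hx.1.le, le_trans hx.2 h2.le⟩
  have hνne : ν ≠ 0 := by
    intro h
    have h1 : ν Set.univ = 0 := by rw [h]; simp
    rw [hν, Measure.restrict_apply_univ, Real.volume_Ioc] at h1
    rw [ENNReal.ofReal_eq_zero] at h1
    linarith
  haveI : (ae ν).NeBot := ae_neBot.2 hνne
  have himm' : ∀ᵐ θ ∂ν, deriv c θ ≠ 0 :=
    ae_mono (Measure.restrict_mono hsub le_rfl) himm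
  have hdiff : ∀ᵐ θ ∂ν, DifferentiableAt ℝ c θ := ae_restrict_of_ae hc.ae_differentiableAt
  have hmem : ∀ᵐ θ ∂ν, θ ∈ Set.Ioc θ₁ θ₂ := ae_restrict_mem measurableSet_Ioc
  set a : ℝ → ℝ := fun θ => angle2pi (deriv c θ) with haa
  set S : Set ℝ := {θ | θ ∈ Set.Icc θ₁ θ₂ ∧ DifferentiableAt ℝ c θ ∧ deriv c θ ≠ 0} with hS
  have hmemS : ∀ᵐ θ ∂ν, θ ∈ S := by
    filter_upwards [himm', hdiff, hmem] with θ u1 u2 u3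
    exact ⟨Set.Ioc_subset_Icc_self u3, u2, u1⟩
  set A : Set ℝ := a '' S with hA
  have hAne : A.Nonempty := by
    obtain ⟨θ, hθ⟩ := hmemS.exists
    exact ⟨a θ, θ, hθ, rfl⟩
  have hAbdd : BddAbove A := ⟨2*π, by rintro x ⟨θ, -, rfl⟩; exact (angle2pi_mem _).2.le⟩
  have hAbddb : BddBelow A := ⟨0, by rintro x ⟨θ, -, rfl⟩; exact (angle2pi_mem _).1⟩
  have hpair : ∀ x ∈ A, ∀ y ∈ A, x - y < π := by
    rintro x ⟨θ, hθ, rfl⟩ y ⟨θ', hθ', rfl⟩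
    have h := hcon θ hθ.1 θ' hθ'.1 hθ.2.1 hθ'.2.1 hθ.2.2 hθ'.2.2
    exact (abs_lt.1 h).2
  have hdiam : sSup A ≤ sInf A + π := by
    apply csSup_le hAne
    intro x hx
    have h1 : x - π ≤ sInf A := le_csInf hAne (fun y hy => by linarith [hpair x hx y hy])
    linarith
  set μ : ℝ := (sInf A + sSup A) / 2 with hμ
  have hrange : ∀ θ ∈ S, a θ - μ ∈ Set.Icc (-(π/2)) (π/2) := by
    intro θ hθ
    have h1 : sInf A ≤ a θ := csInf_le hAbddb ⟨θ, hθ, rfl⟩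
    have h2 : a θ ≤ sSup A := le_csSup hAbdd ⟨θ, hθ, rfl⟩
    exact ⟨by linarith [hdiam], by linarith [hdiam]⟩
  set w : ℝ → ℂ := fun θ => deriv c θ * Complex.exp (-(μ : ℂ) * Complex.I) with hw
  have hKb : ∀ θ, ‖deriv c θ‖ ≤ (K : ℝ) := norm_deriv_le_of_lip hc
  haveI : IsFiniteMeasure ν :=
    ⟨by rw [hν, Measure.restrict_apply_univ]; exact measure_Ioc_lt_top⟩
  have hintd : Integrable (deriv c) ν :=
    ⟨(measurable_deriv c).aestronglyMeasurable.restrict,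
      HasFiniteIntegral.of_bounded (C := (K : ℝ)) (Filter.Eventually.of_forall hKb)⟩
  have hintw : Integrable w ν := hintd.mul_const _
  have hftc : ∫ θ in Set.Ioc θ₁ θ₂, deriv c θ = 0 := by
    rw [lipschitz_integral_deriv hc h12.le, heq, sub_self]
  have hintw0 : ∫ θ, w θ ∂ν = 0 := by
    rw [hw]
    rw [MeasureTheory.integral_mul_const]
    rw [hν, hftc, zero_mul]
  have hre0 : ∫ θ, (w θ).re ∂ν = 0 := by
    have := _root_.integral_re hintw
    simp only [RCLike.re_to_complex] at this
    rw [this, hintw0, Complex.zero_re]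
  have him0 : ∫ θ, (w θ).im ∂ν = 0 := by
    have := _root_.integral_im hintw
    simp only [RCLike.im_to_complex] at this
    rw [this, hintw0, Complex.zero_im]
  have hnn : ∀ᵐ θ ∂ν, 0 ≤ (w θ).re := by
    filter_upwards [hmemS] with θ hθ
    rw [hw]
    rw [rot_re]
    exact mul_nonneg (norm_nonneg _) (Real.cos_nonneg_of_mem_Icc (hrange θ hθ))
  have hre_ae : ∀ᵐ θ ∂ν, (w θ).re = 0 := by
    have := (MeasureTheory.integral_eq_zero_iff_of_nonneg_ae hnn hintw.re).1 hre0
    filter_upwards [this] with θ hθ using hθ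
  -- the good a.e. set
  have hG : ∀ᵐ θ ∂ν, θ ∈ Set.Ioc θ₁ θ₂ ∧ DifferentiableAt ℝ c θ ∧ deriv c θ ≠ 0 ∧
      (w θ).re = 0 := by
    filter_upwards [hmem, hdiff, himm', hre_ae] with θ u1 u2 u3 u4
    exact ⟨u1, u2, u3, u4⟩
  set G : Set ℝ := {θ | θ ∈ Set.Ioc θ₁ θ₂ ∧ DifferentiableAt ℝ c θ ∧ deriv c θ ≠ 0 ∧
      (w θ).re = 0} with hGdef
  have hGnull : ν Gᶜ = 0 := by
    have := ae_iff.1 hG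
    simpa only [hGdef, Set.compl_setOf, not_and_or] using (ae_iff.1 hG)
  -- positivity of both half sets
  have key : ∀ (s : Set ℝ), ν s ≠ 0 → ∃ θ, θ ∈ s ∧ θ ∈ G := by
    intro s hs
    have hdiffnull : ν (s \ G) = 0 := measure_mono_null (fun x hx => hx.2) hGnull
    have : ν (s ∩ G) = ν s := measure_inter_conull' hdiffnull
    obtain ⟨θ, hθ⟩ := nonempty_of_measure_ne_zero (by rw [this]; exact hs)
    exact ⟨θ, hθ.1, hθ.2⟩
  have hneg : ν {θ | (w θ).im < 0} ≠ 0 := by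
    intro h0
    have hnn2 : ∀ᵐ θ ∂ν, 0 ≤ (w θ).im := by
      rw [ae_iff]
      simpa [not_le] using h0
    have him_ae : ∀ᵐ θ ∂ν, (w θ).im = 0 := by
      have := (MeasureTheory.integral_eq_zero_iff_of_nonneg_ae hnn2 hintw.im).1 him0
      filter_upwards [this] with θ hθ using hθ
    have : ∀ᵐ θ ∂ν, False := by
      filter_upwards [him_ae, hre_ae, himm'] with θ u1 u2 u3
      have hw0 : w θ = 0 := Complex.ext u2 u1
      exact (mul_ne_zero u3 (Complex.exp_ne_zero _)) hw0
    obtain ⟨_, hfalse⟩ := this.exists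
    exact hfalse
  have hpos : ν {θ | 0 < (w θ).im} ≠ 0 := by
    intro h0
    have hnn2 : ∀ᵐ θ ∂ν, 0 ≤ -(w θ).im := by
      rw [ae_iff]
      simpa [not_le, neg_nonneg] using h0
    have hint2 : Integrable (fun θ => -(w θ).im) ν := hintw.im.neg
    have h02 : ∫ θ, -(w θ).im ∂ν = 0 := by rw [integral_neg, him0, neg_zero]
    have him_ae : ∀ᵐ θ ∂ν, (w θ).im = 0 := by
      have := (MeasureTheory.integral_eq_zero_iff_of_nonneg_ae hnn2 hint2).1 h02
      filter_upwards [this] with θ hθ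
      have : -(w θ).im = 0 := hθ
      linarith
    have : ∀ᵐ θ ∂ν, False := by
      filter_upwards [him_ae, hre_ae, himm'] with θ u1 u2 u3
      have hw0 : w θ = 0 := Complex.ext u2 u1
      exact (mul_ne_zero u3 (Complex.exp_ne_zero _)) hw0
    obtain ⟨_, hfalse⟩ := this.exists
    exact hfalse
  obtain ⟨θp, hθp_im, hθp⟩ := key _ hpos
  obtain ⟨θm, hθm_im, hθm⟩ := key _ hneg
  have hθpS : θp ∈ S := ⟨Set.Ioc_subset_Icc_self hθp.1, hθp.2.1, hθp.2.2.1⟩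
  have hθmS : θm ∈ S := ⟨Set.Ioc_subset_Icc_self hθm.1, hθm.2.1, hθm.2.2.1⟩
  -- compute angles
  have hangle : ∀ θ, θ ∈ S → θ ∈ G → 0 < (w θ).im → a θ - μ = π/2 := by
    intro θ hθS hθG him
    have habs : (0:ℝ) < ‖deriv c θ‖ := norm_pos_iff.mpr hθS.2.2
    have hre : ‖deriv c θ‖ * Real.cos (a θ - μ) = 0 := by
      rw [← rot_re]; exact hθG.2.2.2
    have hcos : Real.cos (a θ - μ) = 0 := by
      rcases mul_eq_zero.1 hre with h | h
      · exact absurd h habs.ne'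
      · exact h
    have hsin : 0 < Real.sin (a θ - μ) := by
      have : (w θ).im = ‖deriv c θ‖ * Real.sin (a θ - μ) := rot_im _ _
      nlinarith [him, habs]
    rcases pm_half_pi (hrange θ hθS) hcos with h | h
    · exact h
    · exfalso
      rw [h, Real.sin_neg, Real.sin_pi_div_two] at hsin
      linarith
  have hangle' : ∀ θ, θ ∈ S → θ ∈ G → (w θ).im < 0 → a θ - μ = -(π/2) := by
    intro θ hθS hθG him
    have habs : (0:ℝ) < ‖deriv c θ‖ := norm_pos_iff.mpr hθS.2.2
    have hre : ‖deriv c θ‖ * Real.cos (a θ - μ) = 0 := by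
      rw [← rot_re]; exact hθG.2.2.2
    have hcos : Real.cos (a θ - μ) = 0 := by
      rcases mul_eq_zero.1 hre with h | h
      · exact absurd h habs.ne'
      · exact h
    have hsin : Real.sin (a θ - μ) < 0 := by
      have : (w θ).im = ‖deriv c θ‖ * Real.sin (a θ - μ) := rot_im _ _
      nlinarith [him, habs]
    rcases pm_half_pi (hrange θ hθS) hcos with h | h
    · exfalso
      rw [h, Real.sin_pi_div_two] at hsin
      linarith
    · exact h
  have hp := hangle θp hθpS hθp hθp_im
  have hm := hangle' θm hθmS hθm hθm_im
  have hfinal := hcon θp hθpS.1 θm hθmS.1 hθpS.2.1 hθmS.2.1 hθpS.2.2 hθmS.2.2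
  have : a θp - a θm = π := by linarith
  rw [haa] at this  -- a is defeq
  have habs : |angle2pi (deriv c θp) - angle2pi (deriv c θm)| = π := by
    rw [show angle2pi (deriv c θp) - angle2pi (deriv c θm) = a θp - a θm from rfl, this]
    exact abs_of_pos pi_pos
  rw [habs] at hfinal
  exact lt_irrefl _ hfinal
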